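/- Let H be a connected graph satisfying vc(H) ≤ LP_VC(H) + d, where vc is the vertex cover number and LP_VC is the optimum of the fractional vertex cover LP. Then every minimal blocking set Y of H satisfies |Y| ≤ 2d + 2. -/

import Mathlib

/-!
Minimality of `Y` gives, for each `y ∈ Y`, a maximum independent set `I y` with
`I y ∩ Y = {y}`. Let `c v` count the sets `I y` containing `v`; then `∑ c = |Y| α` and
`c u + c v ≤ |Y|` along every edge, so the heavy vertices (`2 c > |Y|`) are independent. Because
`Y` is blocking, Hall's condition lets us match the heavy vertices outside `I y` into their
neighbours in `I y - y`, and charging along these matchings gives `∑ (|Y| - 2 c) ≥ 0` over the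
vertices outside `Y` with `0 < c < |Y|`. Against the half-integral vertex cover that is `0` on
`T = {c = |Y|}` and `1` on `N(T)` this yields `|Y| (|Y| - 2) ≤ 2 |Y| (n - α - LP_VC)`, and
`n - α ≤ vc ≤ LP_VC + d`.
-/

attribute [local instance] Classical.propDecidable

namespace VCKernel

variable {V : Type*} [Fintype V] [DecidableEq V]

/-- `S` is an independent set of `G`. -/
def IsIndep (G : SimpleGraph V) (S : Finset V) : Prop :=
  ∀ u ∈ S, ∀ v ∈ S, ¬ G.Adj u v

/-- Independence number of the subgraph of `G` induced on the vertex set `A`. -/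
noncomputable def alphaOn (G : SimpleGraph V) (A : Set V) : ℕ :=
  sSup {n | ∃ S : Finset V, ↑S ⊆ A ∧ IsIndep G S ∧ S.card = n}

/-- Independence number `α(G)`. -/
noncomputable def alpha (G : SimpleGraph V) : ℕ := alphaOn G Set.univ

/-- `Y` is a blocking set: deleting it decreases the independence number. -/
def IsBlocking (G : SimpleGraph V) (Y : Finset V) : Prop :=
  alphaOn G (Set.univ \ ↑Y) < alpha G

/-- `Y` is a minimal blocking set. -/
def IsMinBlocking (G : SimpleGraph V) (Y : Finset V) : Prop :=
  IsBlocking G Y ∧ ∀ Y' ⊂ Y, ¬ IsBlocking G Y'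

/-- Open neighborhood of the vertex set `X'` in `G`. -/
def nbhd (G : SimpleGraph V) (X' : Finset V) : Set V :=
  {v | ∃ u ∈ X', G.Adj u v}

/-- Number of conflicts induced by `X'` on the induced subgraph with vertex set `A`. -/
noncomputable def conf (G : SimpleGraph V) (A : Set V) (X' : Finset V) : ℕ :=
  alphaOn G A - alphaOn G (A \ nbhd G X')

/-- `C` is (the vertex set of) a connected component of the subgraph of `G`
induced on `A`. -/
def IsCompOf (G : SimpleGraph V) (A C : Set V) : Prop :=
  C ⊆ A ∧ (G.induce C).Connected ∧ ∀ u ∈ C, ∀ v ∈ A, G.Adj u v → v ∈ C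

/-- Feasible solution to the Independent Set LP of the subgraph induced on `A`. -/
def FeasISOn (G : SimpleGraph V) (A : Set V) (x : V → ℝ) : Prop :=
  (∀ v ∈ A, 0 ≤ x v ∧ x v ≤ 1) ∧
    ∀ u ∈ A, ∀ v ∈ A, G.Adj u v → x u + x v ≤ 1

/-- Half-integrality on `A`. -/
def HalfIntOn (A : Set V) (x : V → ℝ) : Prop :=
  ∀ v ∈ A, x v = 0 ∨ x v = 1/2 ∨ x v = 1

/-- Objective value of an LP solution on vertex set `A`. -/
noncomputable def weightOn (A : Set V) (x : V → ℝ) : ℝ :=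
  ∑ v, if v ∈ A then x v else 0

/-- `x` is an optimum half-integral solution to the Independent Set LP
of the subgraph induced on `A`. -/
def OptHIOn (G : SimpleGraph V) (A : Set V) (x : V → ℝ) : Prop :=
  FeasISOn G A x ∧ HalfIntOn A x ∧
    ∀ y : V → ℝ, FeasISOn G A y → HalfIntOn A y → weightOn A y ≤ weightOn A x

/-- Feasible solution to the Vertex Cover LP of `G`. -/
def FeasVC (G : SimpleGraph V) (x : V → ℝ) : Prop :=
  (∀ v, 0 ≤ x v ∧ x v ≤ 1) ∧ ∀ u v, G.Adj u v → 1 ≤ x u + x v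

/-- Optimum value of the Independent Set LP of `G`. -/
noncomputable def lpIS (G : SimpleGraph V) : ℝ :=
  sSup {w | ∃ x : V → ℝ, FeasISOn G Set.univ x ∧ w = ∑ v, x v}

/-- Optimum value of the Vertex Cover LP of `G`. -/
noncomputable def lpVC (G : SimpleGraph V) : ℝ :=
  sInf {w | ∃ x : V → ℝ, FeasVC G x ∧ w = ∑ v, x v}

/-- `C` is a vertex cover of `G`. -/
def IsVC (G : SimpleGraph V) (C : Finset V) : Prop :=
  ∀ u v, G.Adj u v → u ∈ C ∨ v ∈ C

/-- Vertex cover number of `G`. -/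
noncomputable def vcNum (G : SimpleGraph V) : ℕ :=
  sInf {n | ∃ C : Finset V, IsVC G C ∧ C.card = n}

/-- `Z` is a feedback vertex set of `G`. -/
def IsFVS (G : SimpleGraph V) (Z : Finset V) : Prop :=
  (G.induce ((↑Z : Set V)ᶜ)).IsAcyclic

/-- `Z` is an odd cycle transversal of `G`. -/
def IsOCT (G : SimpleGraph V) (Z : Finset V) : Prop :=
  (G.induce ((↑Z : Set V)ᶜ)).Colorable 2

/-- `G` is a `d`-quasi-forest: each connected component has a feedback
vertex set of size at most `d`. -/
def QuasiForest (G : SimpleGraph V) (d : ℕ) : Prop :=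
  ∀ C : Set V, IsCompOf G Set.univ C →
    ∃ Z : Finset V, Z.card ≤ d ∧ (G.induce (C \ ↑Z)).IsAcyclic

/-- `G` is `d`-quasi-bipartite: each connected component has an odd cycle
transversal of size at most `d`. -/
def QuasiBipartite (G : SimpleGraph V) (d : ℕ) : Prop :=
  ∀ C : Set V, IsCompOf G Set.univ C →
    ∃ Z : Finset V, Z.card ≤ d ∧ (G.induce (C \ ↑Z)).Colorable 2

/-- Feedback vertex set number of `G`. -/
noncomputable def fvsNum (G : SimpleGraph V) : ℕ :=
  sInf {n | ∃ Z : Finset V, IsFVS G Z ∧ Z.card = n}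

/-- Odd cycle transversal number of `G`. -/
noncomputable def octNum (G : SimpleGraph V) : ℕ :=
  sInf {n | ∃ Z : Finset V, IsOCT G Z ∧ Z.card = n}

/-- The subgraph of `G` induced on `A` has treedepth at most `k`
(elimination-forest characterization of treedepth). -/
def tdLE (G : SimpleGraph V) : ℕ → Set V → Prop
  | 0, A => A = ∅
  | (k+1), A => ∀ C : Set V, IsCompOf G A C → ∃ v ∈ C, tdLE G k (C \ {v})

open Finset

set_option linter.unusedSectionVars false

lemma bddAbove_indepCards (G : SimpleGraph V) (A : Set V) :
    BddAbove {n | ∃ S : Finset V, ↑S ⊆ A ∧ IsIndep G S ∧ S.card = n} :=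
  ⟨Fintype.card V, by rintro n ⟨S, -, -, rfl⟩; exact card_le_univ S⟩

lemma exists_indep_card_eq_alphaOn (G : SimpleGraph V) (A : Set V) :
    ∃ S : Finset V, ↑S ⊆ A ∧ IsIndep G S ∧ S.card = alphaOn G A :=
  Nat.sSup_mem (s := {n | ∃ S : Finset V, (S : Set V) ⊆ A ∧ IsIndep G S ∧ S.card = n})
    ⟨0, ∅, by simp, by simp [IsIndep], rfl⟩ (bddAbove_indepCards G A)

lemma card_le_alphaOn {G : SimpleGraph V} {A : Set V} {S : Finset V} (hS : ↑S ⊆ A)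
    (hS_indep : IsIndep G S) : #S ≤ alphaOn G A :=
  le_csSup (bddAbove_indepCards G A) ⟨S, hS, hS_indep, rfl⟩

lemma card_le_alpha {G : SimpleGraph V} {S : Finset V} (hS : IsIndep G S) : #S ≤ alpha G :=
  card_le_alphaOn (Set.subset_univ _) hS

lemma card_le_vcNum_add_alpha (G : SimpleGraph V) : Fintype.card V ≤ vcNum G + alpha G := by
  obtain ⟨C, hC, hC_card⟩ := Nat.sInf_mem (s := {n | ∃ C : Finset V, IsVC G C ∧ C.card = n})
    ⟨_, univ, fun u _ _ => Or.inl (mem_univ u), rfl⟩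
  have hCc_indep : IsIndep G Cᶜ := fun u hu v hv huv => by
    rcases hC u v huv with h | h
    · exact mem_compl.1 hu h
    · exact mem_compl.1 hv h
  have := card_le_alpha hCc_indep
  rw [card_compl] at this
  unfold vcNum
  omega

lemma lpVC_le_sum {G : SimpleGraph V} {x : V → ℝ} (hx : FeasVC G x) : lpVC G ≤ ∑ v, x v :=
  csInf_le ⟨0, by rintro w ⟨z, hz, rfl⟩; exact sum_nonneg fun v _ => (hz.1 v).1⟩ ⟨x, hx, rfl⟩

noncomputable def halfCover (G : SimpleGraph V) (T : Finset V) (v : V) : ℝ :=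
  if v ∈ nbhd G T then 1 else if v ∈ T then 0 else 1 / 2

lemma feasVC_halfCover (G : SimpleGraph V) (T : Finset V) : FeasVC G (halfCover G T) := by
  refine ⟨fun v => by unfold halfCover; split_ifs <;> norm_num, fun u v huv => ?_⟩
  have hu : u ∈ T → v ∈ nbhd G T := fun hu => ⟨u, hu, huv⟩
  have hv : v ∈ T → u ∈ nbhd G T := fun hv => ⟨v, hv, huv.symm⟩
  unfold halfCover
  split_ifs <;> norm_num <;> tauto

lemma IsBlocking.card_lt_alpha {G : SimpleGraph V} {Y S : Finset V} (hY : IsBlocking G Y)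
    (hS : IsIndep G S) (hSY : Disjoint S Y) : #S < alpha G :=
  (card_le_alphaOn (Set.subset_sdiff.2 ⟨Set.subset_univ _, disjoint_coe.2 hSY⟩) hS).trans_lt hY

lemma IsMinBlocking.exists_indep_inter_eq_singleton {G : SimpleGraph V} {Y : Finset V}
    (hY : IsMinBlocking G Y) {y : V} (hy : y ∈ Y) :
    ∃ S : Finset V, IsIndep G S ∧ #S = alpha G ∧ S ∩ Y = {y} := by
  obtain ⟨S, hS_sub, hS, hS_card⟩ := exists_indep_card_eq_alphaOn G (Set.univ \ ↑(Y.erase y))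
  have hS_alpha : #S = alpha G :=
    (card_le_alpha hS).antisymm (hS_card ▸ not_lt.1 (hY.2 _ (erase_ssubset hy)))
  have hS_disj : Disjoint S (Y.erase y) := disjoint_coe.1 (Set.subset_sdiff.1 hS_sub).2
  have hS_inter : S ∩ Y ⊆ {y} := fun v hv => by
    by_contra hvy
    exact disjoint_left.1 hS_disj (mem_inter.1 hv).1
      (mem_erase.2 ⟨by simpa using hvy, (mem_inter.1 hv).2⟩)
  have hyS : y ∈ S := by
    by_contra hyS
    refine (hY.1.card_lt_alpha hS (disjoint_left.2 fun v hvS hvY => hyS ?_)).ne hS_alpha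
    obtain rfl := mem_singleton.1 (hS_inter (mem_inter.2 ⟨hvS, hvY⟩))
    exact hvS
  exact ⟨S, hS, hS_alpha, hS_inter.antisymm (singleton_subset_iff.2 (mem_inter.2 ⟨hyS, hy⟩))⟩

structure MaxIndepFamily (G : SimpleGraph V) (Y : Finset V) (I : V → Finset V) : Prop where
  indep : ∀ y ∈ Y, IsIndep G (I y)
  card_eq : ∀ y ∈ Y, #(I y) = alpha G
  inter_eq : ∀ y ∈ Y, I y ∩ Y = {y}

lemma IsMinBlocking.exists_maxIndepFamily {G : SimpleGraph V} {Y : Finset V}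
    (hY : IsMinBlocking G Y) : ∃ I, MaxIndepFamily G Y I := by
  choose! I hI using fun y (hy : y ∈ Y) => hY.exists_indep_inter_eq_singleton hy
  exact ⟨I, fun y hy => (hI y hy).1, fun y hy => (hI y hy).2.1, fun y hy => (hI y hy).2.2⟩

noncomputable def memCount (Y : Finset V) (I : V → Finset V) (v : V) : ℕ := #{y ∈ Y | v ∈ I y}

noncomputable def midVerts (Y : Finset V) (I : V → Finset V) : Finset V :=
  {v | v ∉ Y ∧ 0 < memCount Y I v ∧ memCount Y I v < #Y}

noncomputable def heavyVerts (Y : Finset V) (I : V → Finset V) : Finset V :=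
  {v ∈ midVerts Y I | #Y < 2 * memCount Y I v}

noncomputable def lightVerts (Y : Finset V) (I : V → Finset V) : Finset V :=
  {v ∈ midVerts Y I | 2 * memCount Y I v ≤ #Y}

section memCount

variable {G : SimpleGraph V} {Y : Finset V} {I : V → Finset V}

lemma memCount_le (v : V) : memCount Y I v ≤ #Y := card_filter_le _ _

lemma memCount_pos {v y : V} (hy : y ∈ Y) (hv : v ∈ I y) : 0 < memCount Y I v :=
  card_pos.2 ⟨y, mem_filter.2 ⟨hy, hv⟩⟩

lemma sum_sum_filter_mem (W : Finset V) (g : V → ℝ) :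
    ∑ y ∈ Y, ∑ v ∈ W with v ∈ I y, g v = ∑ v ∈ W, memCount Y I v * g v := by
  simp_rw [sum_filter]
  rw [sum_comm]
  refine sum_congr rfl fun v _ => ?_
  rw [← sum_filter, sum_const, nsmul_eq_mul, memCount]

lemma sum_sum_filter_notMem (W : Finset V) (g : V → ℝ) :
    ∑ y ∈ Y, ∑ v ∈ W with v ∉ I y, g v = ∑ v ∈ W, (#Y - memCount Y I v : ℝ) * g v := by
  have hsplit (y : V) : ∑ v ∈ W with v ∉ I y, g v = ∑ v ∈ W, g v - ∑ v ∈ W with v ∈ I y, g v := by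
    rw [← sum_filter_add_sum_filter_not W (· ∈ I y)]
    ring
  simp_rw [hsplit, sum_sub_distrib, sum_sum_filter_mem, sum_const, nsmul_eq_mul, mul_sum,
    ← sum_sub_distrib, sub_mul]

namespace MaxIndepFamily

lemma self_mem (hI : MaxIndepFamily G Y I) {y : V} (hy : y ∈ Y) : y ∈ I y :=
  (mem_inter.1 ((hI.inter_eq y hy).symm ▸ mem_singleton_self y)).1

lemma notMem_of_mem_erase (hI : MaxIndepFamily G Y I) {y v : V} (hy : y ∈ Y)
    (hv : v ∈ (I y).erase y) : v ∉ Y := fun hvY =>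
  (mem_erase.1 hv).1 (mem_singleton.1 (hI.inter_eq y hy ▸ mem_inter.2 ⟨(mem_erase.1 hv).2, hvY⟩))

lemma memCount_of_mem (hI : MaxIndepFamily G Y I) {y : V} (hy : y ∈ Y) : memCount Y I y = 1 := by
  rw [memCount, card_eq_one]
  refine ⟨y, eq_singleton_iff_unique_mem.2 ⟨mem_filter.2 ⟨hy, hI.self_mem hy⟩, fun z hz => ?_⟩⟩
  obtain ⟨hz, hyz⟩ := mem_filter.1 hz
  have : y ∈ I z ∩ Y := mem_inter.2 ⟨hyz, hy⟩
  rw [hI.inter_eq z hz] at this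
  exact (mem_singleton.1 this).symm

lemma memCount_add_le_of_adj (hI : MaxIndepFamily G Y I) {u v : V} (huv : G.Adj u v) :
    memCount Y I u + memCount Y I v ≤ #Y := by
  rw [memCount, memCount, ← card_union_of_disjoint]
  · exact card_le_card (union_subset (filter_subset _ _) (filter_subset _ _))
  · refine disjoint_left.2 fun y hu hv => ?_
    exact hI.indep y (mem_filter.1 hu).1 u (mem_filter.1 hu).2 v (mem_filter.1 hv).2 huv

lemma sum_memCount (hI : MaxIndepFamily G Y I) : ∑ v, (memCount Y I v : ℝ) = #Y * alpha G := by
  have := sum_sum_filter_mem (Y := Y) (I := I) univ 1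
  simp only [Pi.one_apply, sum_const, nsmul_eq_mul, mul_one, filter_mem_eq_inter,
    univ_inter] at this
  rw [← this, sum_congr rfl fun y hy => by rw [hI.card_eq y hy]]
  simp

lemma memCount_eq_zero_of_adj (hI : MaxIndepFamily G Y I) {u v : V}
    (hu : memCount Y I u = #Y) (huv : G.Adj u v) : memCount Y I v = 0 := by
  have := hI.memCount_add_le_of_adj huv
  omega

/-- Hall's condition: otherwise swapping `S` into `I y` in place of its neighbours would give an
independent set of size `α` avoiding `Y`. -/
lemma card_le_card_adj (hI : MaxIndepFamily G Y I) (hY : IsBlocking G Y) {y : V} (hy : y ∈ Y)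
    {S : Finset V} (hS : ∀ u ∈ S, u ∉ Y ∧ #Y < 2 * memCount Y I u) (hSy : Disjoint S (I y)) :
    #S ≤ #{v ∈ (I y).erase y | ∃ u ∈ S, G.Adj u v} := by
  set N := {v ∈ (I y).erase y | ∃ u ∈ S, G.Adj u v} with hN
  set F := (I y).erase y \ N
  have hB_indep : IsIndep G (S ∪ F) := by
    intro a ha b hb hab
    rcases mem_union.1 ha with ha | ha <;> rcases mem_union.1 hb with hb | hb
    · have := hI.memCount_add_le_of_adj hab
      have := (hS a ha).2
      have := (hS b hb).2
      omega
    · exact (mem_sdiff.1 hb).2 (mem_filter.2 ⟨(mem_sdiff.1 hb).1, a, ha, hab⟩)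
    · exact (mem_sdiff.1 ha).2 (mem_filter.2 ⟨(mem_sdiff.1 ha).1, b, hb, hab.symm⟩)
    · exact hI.indep y hy a (mem_of_mem_erase (mem_sdiff.1 ha).1) b
        (mem_of_mem_erase (mem_sdiff.1 hb).1) hab
  have hB_disj : Disjoint (S ∪ F) Y := disjoint_union_left.2
    ⟨disjoint_left.2 fun u hu => (hS u hu).1,
      disjoint_left.2 fun v hv => hI.notMem_of_mem_erase hy (mem_sdiff.1 hv).1⟩
  have hSF : Disjoint S F := disjoint_of_subset_right (sdiff_subset.trans (erase_subset _ _)) hSy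
  have hB_card := hY.card_lt_alpha hB_indep hB_disj
  have hIy_card : #((I y).erase y) = alpha G - 1 := by
    rw [card_erase_of_mem (hI.self_mem hy), hI.card_eq y hy]
  have hN_card : #N ≤ alpha G - 1 := hIy_card ▸ card_le_card (filter_subset _ _)
  rw [card_union_of_disjoint hSF, card_sdiff_of_subset (filter_subset _ _), hIy_card,
    ← hN] at hB_card
  omega

lemma exists_injective_adj (hI : MaxIndepFamily G Y I) (hY : IsBlocking G Y) {y : V}
    (hy : y ∈ Y) : ∃ f : {u // u ∈ {u ∈ heavyVerts Y I | u ∉ I y}} → V,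
      Function.Injective f ∧ ∀ u, f u ∈ (I y).erase y ∧ G.Adj u (f u) := by
  have hall := (all_card_le_biUnion_card_iff_exists_injective
    fun u : {u // u ∈ {u ∈ heavyVerts Y I | u ∉ I y}} => {v ∈ (I y).erase y | G.Adj u v}).1
  refine (hall fun s => ?_).imp fun f hf => ⟨hf.1, fun u => mem_filter.1 (hf.2 u)⟩
  have hS (u) (hu : u ∈ s.map (Function.Embedding.subtype _)) :
      u ∉ Y ∧ #Y < 2 * memCount Y I u ∧ u ∉ I y := by
    obtain ⟨w, -, rfl⟩ := mem_map.1 hu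
    have hw := w.2
    simp only [heavyVerts, midVerts, mem_filter, mem_univ, true_and] at hw
    exact ⟨hw.1.1.1, hw.1.2, hw.2⟩
  calc #s = #(s.map (Function.Embedding.subtype _)) := (card_map _).symm
    _ ≤ #{v ∈ (I y).erase y | ∃ u ∈ s.map (Function.Embedding.subtype _), G.Adj u v} :=
      hI.card_le_card_adj hY hy (fun u hu => ⟨(hS u hu).1, (hS u hu).2.1⟩)
        (disjoint_left.2 fun u hu => (hS u hu).2.2)
    _ ≤ #(s.biUnion _) := card_le_card fun v hv => by
      obtain ⟨hv, u, hu, huv⟩ := mem_filter.1 hv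
      obtain ⟨w, hw, rfl⟩ := mem_map.1 hu
      exact mem_biUnion.2 ⟨w, hw, mem_filter.2 ⟨hv, huv⟩⟩

/-- Charging along the matching of `exists_injective_adj`: a heavy `u` is matched to a
neighbour `v` with `memCount v ≤ #Y - memCount u`. -/
lemma sum_heavy_notMem_le (hI : MaxIndepFamily G Y I) (hY : IsBlocking G Y) {y : V}
    (hy : y ∈ Y) :
    ∑ u ∈ heavyVerts Y I with u ∉ I y, ((#Y : ℝ) / (#Y - memCount Y I u) - 2) ≤
      ∑ v ∈ lightVerts Y I with v ∈ I y, ((#Y : ℝ) / memCount Y I v - 2) := by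
  obtain ⟨f, hf_inj, hf⟩ := hI.exists_injective_adj hY hy
  have hf_count (u) : 0 < memCount Y I (f u) ∧ memCount Y I (f u) + memCount Y I u ≤ #Y :=
    ⟨memCount_pos hy (mem_of_mem_erase (hf u).1),
      add_comm (memCount Y I u) _ ▸ hI.memCount_add_le_of_adj (hf u).2⟩
  have hf_light (u) : f u ∈ {v ∈ lightVerts Y I | v ∈ I y} := by
    have hu := u.2
    simp only [heavyVerts, midVerts, mem_filter, mem_univ, true_and] at hu
    have := hf_count u
    simp only [lightVerts, midVerts, mem_filter, mem_univ, true_and]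
    exact ⟨⟨⟨hI.notMem_of_mem_erase hy (hf u).1, by omega, by omega⟩, by omega⟩,
      mem_of_mem_erase (hf u).1⟩
  have hlight_nonneg (v) (hv : v ∈ {v ∈ lightVerts Y I | v ∈ I y}) :
      0 ≤ (#Y : ℝ) / memCount Y I v - 2 := by
    simp only [lightVerts, midVerts, mem_filter, mem_univ, true_and] at hv
    rw [sub_nonneg, le_div_iff₀ (by exact_mod_cast hv.1.1.2.1)]
    exact_mod_cast hv.1.2
  calc ∑ u ∈ heavyVerts Y I with u ∉ I y, ((#Y : ℝ) / (#Y - memCount Y I u) - 2)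
      = ∑ u : {u // u ∈ {u ∈ heavyVerts Y I | u ∉ I y}},
          ((#Y : ℝ) / (#Y - memCount Y I u) - 2) := (sum_coe_sort _ _).symm
    _ ≤ ∑ u, ((#Y : ℝ) / memCount Y I (f u) - 2) := sum_le_sum fun u _ => by
      have := hf_count u
      gcongr
      · exact_mod_cast this.1
      · rw [le_sub_iff_add_le]
        exact_mod_cast this.2
    _ = ∑ v ∈ univ.map ⟨f, hf_inj⟩, ((#Y : ℝ) / memCount Y I v - 2) := by
      rw [sum_map]; rfl
    _ ≤ _ := sum_le_sum_of_subset_of_nonneg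
      (fun v hv => by obtain ⟨u, -, rfl⟩ := mem_map.1 hv; exact hf_light u)
      fun v hv _ => hlight_nonneg v hv

lemma sum_heavy_le_sum_light (hI : MaxIndepFamily G Y I) (hY : IsBlocking G Y) :
    ∑ u ∈ heavyVerts Y I, (2 * memCount Y I u - #Y : ℝ) ≤
      ∑ v ∈ lightVerts Y I, (#Y - 2 * memCount Y I v : ℝ) := by
  have hheavy (u) (hu : u ∈ heavyVerts Y I) : (0 : ℝ) < #Y - memCount Y I u := by
    simp only [heavyVerts, midVerts, mem_filter, mem_univ, true_and] at hu
    exact sub_pos.2 (by exact_mod_cast hu.1.2.2)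
  have hlight (v) (hv : v ∈ lightVerts Y I) : (0 : ℝ) < memCount Y I v := by
    simp only [lightVerts, midVerts, mem_filter, mem_univ, true_and] at hv
    exact_mod_cast hv.1.2.1
  calc ∑ u ∈ heavyVerts Y I, (2 * memCount Y I u - #Y : ℝ)
      = ∑ u ∈ heavyVerts Y I, (#Y - memCount Y I u : ℝ) * (#Y / (#Y - memCount Y I u) - 2) :=
        sum_congr rfl fun u hu => by field_simp [(hheavy u hu).ne']; ring
    _ = ∑ y ∈ Y, ∑ u ∈ heavyVerts Y I with u ∉ I y, ((#Y : ℝ) / (#Y - memCount Y I u) - 2) :=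
        (sum_sum_filter_notMem _ _).symm
    _ ≤ ∑ y ∈ Y, ∑ v ∈ lightVerts Y I with v ∈ I y, ((#Y : ℝ) / memCount Y I v - 2) :=
        sum_le_sum fun y hy => hI.sum_heavy_notMem_le hY hy
    _ = ∑ v ∈ lightVerts Y I, (memCount Y I v : ℝ) * (#Y / memCount Y I v - 2) :=
        sum_sum_filter_mem _ _
    _ = ∑ v ∈ lightVerts Y I, (#Y - 2 * memCount Y I v : ℝ) :=
        sum_congr rfl fun v hv => by field_simp [(hlight v hv).ne']

lemma sum_midVerts_nonneg (hI : MaxIndepFamily G Y I) (hY : IsBlocking G Y) :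
    0 ≤ ∑ v ∈ midVerts Y I, (#Y - 2 * memCount Y I v : ℝ) := by
  rw [← sum_filter_add_sum_filter_not _ fun v => #Y < 2 * memCount Y I v]
  simp_rw [not_lt]
  have := hI.sum_heavy_le_sum_light hY
  rw [← neg_le_iff_add_nonneg', ← sum_neg_distrib]
  simpa only [neg_sub, heavyVerts, lightVerts] using this

lemma ite_le_halfCover (hI : MaxIndepFamily G Y I) (v : V) :
    (if 0 < memCount Y I v ∧ memCount Y I v < #Y then (#Y - 2 * memCount Y I v : ℝ) else 0) ≤
      2 * #Y * (1 - halfCover G {v | memCount Y I v = #Y} v) - 2 * memCount Y I v := by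
  have hle := memCount_le (Y := Y) (I := I) v
  unfold halfCover
  by_cases hN : v ∈ nbhd G {v | memCount Y I v = #Y}
  · obtain ⟨u, hu, huv⟩ := id hN
    have hv := hI.memCount_eq_zero_of_adj (mem_filter.1 hu).2 huv
    simp [hN, hv]
  by_cases hT : v ∈ ({v | memCount Y I v = #Y} : Finset V)
  · have hv := (mem_filter.1 hT).2
    simp [hN, hT, hv]
  have hv : memCount Y I v ≠ #Y := fun h => hT (mem_filter.2 ⟨mem_univ v, h⟩)
  rw [if_neg hN, if_neg hT]
  split_ifs with hmid
  · linarith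
  · have hv0 : memCount Y I v = 0 := by omega
    simp only [hv0, CharP.cast_eq_zero, mul_zero, sub_zero]
    positivity

lemma mul_sub_two_le (hI : MaxIndepFamily G Y I) (hY : IsBlocking G Y) (hm : 2 ≤ #Y) :
    (#Y : ℝ) * (#Y - 2) ≤
      2 * #Y * (Fintype.card V - ∑ v, halfCover G {v | memCount Y I v = #Y} v - alpha G) := by
  set R : Finset V := {v | 0 < memCount Y I v ∧ memCount Y I v < #Y}
  have hR_mem : {v ∈ R | v ∈ Y} = Y := by
    ext v
    simp only [R, mem_filter, mem_univ, true_and, and_iff_right_iff_imp]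
    intro hv
    rw [hI.memCount_of_mem hv]
    omega
  have hR_not_mem : {v ∈ R | v ∉ Y} = midVerts Y I := by
    ext v
    simp only [R, midVerts, mem_filter, mem_univ, true_and]
    tauto
  calc (#Y : ℝ) * (#Y - 2) = ∑ v ∈ Y, (#Y - 2 * memCount Y I v : ℝ) := by
        rw [sum_congr rfl fun v hv => by rw [hI.memCount_of_mem hv], sum_const, nsmul_eq_mul]
        ring
    _ ≤ ∑ v ∈ Y, (#Y - 2 * memCount Y I v : ℝ) +
        ∑ v ∈ midVerts Y I, (#Y - 2 * memCount Y I v : ℝ) :=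
      le_add_of_nonneg_right (hI.sum_midVerts_nonneg hY)
    _ = ∑ v, (if 0 < memCount Y I v ∧ memCount Y I v < #Y then
          (#Y - 2 * memCount Y I v : ℝ) else 0) := by
      rw [← sum_filter, ← sum_filter_add_sum_filter_not R (· ∈ Y), hR_mem, hR_not_mem]
    _ ≤ ∑ v, (2 * #Y * (1 - halfCover G {v | memCount Y I v = #Y} v) -
          2 * memCount Y I v) := sum_le_sum fun v _ => hI.ite_le_halfCover v
    _ = _ := by
      rw [sum_sub_distrib, ← mul_sum, ← mul_sum, hI.sum_memCount, sum_sub_distrib, sum_const,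
        card_univ, nsmul_eq_mul]
      ring

end MaxIndepFamily

end memCount

theorem stmt10_general (G : SimpleGraph V) (d : ℕ) (Y : Finset V)
    (h : (vcNum G : ℝ) ≤ lpVC G + d)
    (hY : IsMinBlocking G Y) :
    Y.card ≤ 2 * d + 2 := by
  obtain ⟨I, hI⟩ := hY.exists_maxIndepFamily
  by_contra! hY_card
  have hcount := hI.mul_sub_two_le hY.1 (by omega)
  have hlp := lpVC_le_sum (feasVC_halfCover G {v | memCount Y I v = #Y})
  have hvc : (Fintype.card V : ℝ) ≤ vcNum G + alpha G := by
    exact_mod_cast card_le_vcNum_add_alpha G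
  have hslack :
      (Fintype.card V : ℝ) - ∑ v, halfCover G {v | memCount Y I v = #Y} v - alpha G ≤ d := by
    linarith
  have hY_card' : (2 * d + 2 : ℝ) < #Y := by exact_mod_cast hY_card
  nlinarith

/-- If `G` is connected and `vc(G) ≤ LP_VC(G) + d`, then every minimal
blocking set `Y` of `G` satisfies `|Y| ≤ 2d + 2`. -/
theorem stmt10 (G : SimpleGraph V) (d : ℕ) (Y : Finset V)
    (hconn : G.Connected) (h : (vcNum G : ℝ) ≤ lpVC G + d)
    (hY : IsMinBlocking G Y) :
    Y.card ≤ 2 * d + 2 :=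
  stmt10_general G d Y h hY

end VCKernel
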